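/- For every n ∈ ℕ with n ≥ 1, there exist N = (9n² − 7n)/2, capacities u¹, u² : Fin N → ℕ, interdiction costs c : Fin N → ℕ, and a budget B ∈ ℕ, such that the set of nondominated points (for minimization) of Y = { (Σ_{i : γ(i)=0} u¹(i), Σ_{i : γ(i)=0} u²(i)) : γ : Fin N → {0,1}, Σᵢ c(i)·γ(i) ≤ B } ⊆ ℕ² has cardinality at least 2ⁿ − 1. In particular, BMFNI is intractable even on two-terminal parallel graphs: its number of nondominated points can be exponential in the size of the instance. -/

import Mathlib

/-!
Take `n` arcs of capacities `(2^i, 0)` and `n` arcs of capacities `(0, 2^i)`, `i < n`, each costing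
its total capacity, pad with arcs of zero capacity and cost, and set the budget to `2^n - 1`.
Interdiction removes at most `2^n - 1` of the total capacity `2 (2^n - 1)`, so every value vector
`y` has `y.1 + y.2 ≥ 2^n - 1`, and points on that antidiagonal are nondominated. Since every
`a < 2^n` is a sum of distinct powers of two, interdicting arcs of weights summing to `a` in the
first group and to `2^n - 1 - a` in the second attains each of the `2^n` points `(2^n - 1 - a, a)`. For `n ≤ 1` there are fewer than `2n` arcs,
but then one nondominated point suffices, and a nonempty subset of `ℕ²` always has one.
-/

/-- The set of nondominated points (for minimization) of `Y ⊆ ℕ²`. -/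
def NDmin (Y : Set (ℕ × ℕ)) : Set (ℕ × ℕ) :=
  {y ∈ Y | ¬ ∃ y' ∈ Y, y' ≤ y ∧ y' ≠ y}

open Finset

/-- The set `Y` of interdicted maximum-flow vectors; `γ i = 1` removes arc `i`. -/
def interdictedValues {ι : Type*} [Fintype ι] (u1 u2 c : ι → ℕ) (B : ℕ) : Set (ℕ × ℕ) :=
  {y | ∃ γ : ι → ℕ, (∀ i, γ i ≤ 1) ∧ (∑ i, c i * γ i) ≤ B ∧
    y = (∑ i ∈ univ.filter (fun i => γ i = 0), u1 i,
         ∑ i ∈ univ.filter (fun i => γ i = 0), u2 i)}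

section InterdictedValues

variable {ι κ : Type*} [Fintype ι] [Fintype κ] {u1 u2 c : ι → ℕ} {B : ℕ}

theorem mem_interdictedValues_iff [DecidableEq ι] {y : ℕ × ℕ} :
    y ∈ interdictedValues u1 u2 c B ↔
      ∃ R : Finset ι, ∑ i ∈ R, c i ≤ B ∧ y = (∑ i ∈ Rᶜ, u1 i, ∑ i ∈ Rᶜ, u2 i) := by
  constructor
  · rintro ⟨γ, hγ, hcost, rfl⟩
    refine ⟨(univ.filter fun i => γ i = 0)ᶜ, ?_, by rw [compl_compl]⟩
    calc ∑ i ∈ (univ.filter fun i => γ i = 0)ᶜ, c i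
        = ∑ i, c i * γ i := by
          rw [compl_filter, sum_filter]
          refine sum_congr rfl fun i _ => ?_
          rcases Nat.le_one_iff_eq_zero_or_eq_one.mp (hγ i) with h | h <;> simp [h]
      _ ≤ B := hcost
  · rintro ⟨R, hcost, rfl⟩
    refine ⟨fun i => if i ∈ R then 1 else 0, fun i => by dsimp only; split_ifs <;> simp, ?_, ?_⟩
    · simpa [mul_ite] using hcost
    · have : univ.filter (fun i => (if i ∈ R then 1 else 0) = 0) = Rᶜ := by
        ext i; simp
      rw [this]

theorem interdictedValues_comp_equiv (e : κ ≃ ι) :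
    interdictedValues (u1 ∘ e) (u2 ∘ e) (c ∘ e) B = interdictedValues u1 u2 c B := by
  ext y
  constructor
  · rintro ⟨γ, hγ, hcost, rfl⟩
    refine ⟨γ ∘ e.symm, fun i => hγ _, ?_, ?_⟩
    · rw [← e.sum_comp]
      simpa using hcost
    · simp only [sum_filter, Function.comp_apply]
      rw [← e.sum_comp, ← e.sum_comp]
      simp
  · rintro ⟨γ, hγ, hcost, rfl⟩
    refine ⟨γ ∘ e, fun i => hγ _, ?_, ?_⟩
    · rw [← e.sum_comp] at hcost
      simpa using hcost
    · simp only [sum_filter, Function.comp_apply]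
      rw [← e.sum_comp, ← e.sum_comp]

theorem interdictedValues_sumElim_zero :
    interdictedValues (Sum.elim u1 (0 : κ → ℕ)) (Sum.elim u2 0) (Sum.elim c 0) B =
      interdictedValues u1 u2 c B := by
  ext y
  constructor
  · rintro ⟨γ, hγ, hcost, rfl⟩
    refine ⟨γ ∘ Sum.inl, fun i => hγ _, ?_, ?_⟩
    · simpa [Fintype.sum_sum_type] using hcost
    · simp [sum_filter, Fintype.sum_sum_type]
  · rintro ⟨γ, hγ, hcost, rfl⟩
    refine ⟨Sum.elim γ 0, fun i => ?_, ?_, ?_⟩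
    · cases i <;> simp [hγ]
    · simpa [Fintype.sum_sum_type] using hcost
    · simp only [sum_filter, Fintype.sum_sum_type, Sum.elim_inl, Sum.elim_inr, Pi.zero_apply,
        ite_self, sum_const_zero, add_zero]
      rfl

theorem interdictedValues_nonempty : (interdictedValues u1 u2 c B).Nonempty :=
  ⟨_, 0, fun _ => zero_le_one, by simp, rfl⟩

theorem interdictedValues_finite : (interdictedValues u1 u2 c B).Finite := by
  classical
  refine (Set.finite_Iic (∑ i, u1 i, ∑ i, u2 i)).subset ?_
  intro y hy
  obtain ⟨R, -, rfl⟩ := mem_interdictedValues_iff.mp hy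
  exact ⟨sum_le_sum_of_subset (subset_univ _), sum_le_sum_of_subset (subset_univ _)⟩

theorem sum_add_sum_le_of_mem_interdictedValues (hc : ∀ i, u1 i + u2 i ≤ c i) {y : ℕ × ℕ}
    (hy : y ∈ interdictedValues u1 u2 c B) : ∑ i, u1 i + ∑ i, u2 i ≤ y.1 + y.2 + B := by
  classical
  obtain ⟨R, hcost, rfl⟩ := mem_interdictedValues_iff.mp hy
  calc ∑ i, u1 i + ∑ i, u2 i
      = ∑ i ∈ Rᶜ, u1 i + ∑ i ∈ Rᶜ, u2 i + ∑ i ∈ R, (u1 i + u2 i) := by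
        rw [← sum_compl_add_sum R u1, ← sum_compl_add_sum R u2, sum_add_distrib]; ring
    _ ≤ ∑ i ∈ Rᶜ, u1 i + ∑ i ∈ Rᶜ, u2 i + B := by grw [sum_le_sum fun i _ => hc i, hcost]

end InterdictedValues

theorem NDmin_subset (Y : Set (ℕ × ℕ)) : NDmin Y ⊆ Y := fun _ hy => hy.1

theorem mem_NDmin_of_add_eq {Y : Set (ℕ × ℕ)} {K : ℕ} (hK : ∀ y ∈ Y, K ≤ y.1 + y.2)
    {y : ℕ × ℕ} (hy : y ∈ Y) (hyK : y.1 + y.2 = K) : y ∈ NDmin Y := by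
  refine ⟨hy, fun ⟨y', hy', hle, hne⟩ => hne ?_⟩
  have := hK y' hy'
  have := Prod.mk_le_mk.mp hle
  ext <;> omega

theorem NDmin_nonempty {Y : Set (ℕ × ℕ)} (hY : Y.Nonempty) : (NDmin Y).Nonempty := by
  obtain ⟨y, hy⟩ := exists_minimal_of_wellFoundedLT (· ∈ Y) hY
  exact ⟨y, hy.prop, fun ⟨y', hy', hle, hne⟩ => hne (le_antisymm hle (hy.le_of_le hy' hle))⟩

theorem exists_finset_sum_two_pow_eq {n a : ℕ} (ha : a < 2 ^ n) :
    ∃ A : Finset (Fin n), ∑ i ∈ A, 2 ^ (i : ℕ) = a := by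
  refine ⟨univ.filter fun i : Fin n => (i : ℕ) ∈ a.bitIndices, ?_⟩
  have hbits : (range n).filter (· ∈ a.bitIndices) = a.bitIndices.toFinset := by
    ext j
    simp only [mem_filter, mem_range, List.mem_toFinset, and_iff_right_iff_imp]
    exact fun hj => (Nat.pow_lt_pow_iff_right (by norm_num)).mp
      ((Nat.two_pow_le_of_mem_bitIndices hj).trans_lt ha)
  rw [sum_filter, Fin.sum_univ_eq_sum_range (fun j => if j ∈ a.bitIndices then 2 ^ j else 0),
    ← sum_filter, hbits, sum_toFinset_bitIndices_two_pow]

theorem sum_add_one_le_ncard_NDmin_of_subset_sums {α : Type*} [Fintype α] (p : α → ℕ)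
    (hp : ∀ a ≤ ∑ i, p i, ∃ A : Finset α, ∑ i ∈ A, p i = a) :
    ∑ i, p i + 1 ≤
      (NDmin (interdictedValues (Sum.elim p 0) (Sum.elim 0 p) (Sum.elim p p) (∑ i, p i))).ncard := by
  classical
  set S := ∑ i, p i
  set Y := interdictedValues (Sum.elim p (0 : α → ℕ)) (Sum.elim 0 p) (Sum.elim p p) S
  have hline : ∀ y ∈ Y, S ≤ y.1 + y.2 := fun y hy => by
    have := sum_add_sum_le_of_mem_interdictedValues (fun i => by cases i <;> simp) hy
    simp only [Fintype.sum_sum_type, Sum.elim_inl, Sum.elim_inr, Pi.zero_apply, sum_const_zero,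
      add_zero, zero_add] at this
    omega
  have hmem : ∀ a ≤ S, (S - a, a) ∈ Y := fun a ha => by
    obtain ⟨A, hA⟩ := hp a ha
    obtain ⟨A', hA'⟩ := hp (S - a) (Nat.sub_le S a)
    have h1 := sum_compl_add_sum (A.disjSum A') (Sum.elim p (0 : α → ℕ))
    have h2 := sum_compl_add_sum (A.disjSum A') (Sum.elim (0 : α → ℕ) p)
    simp only [sum_disjSum, Fintype.sum_sum_type, Sum.elim_inl, Sum.elim_inr, Pi.zero_apply,
      sum_const_zero, add_zero, zero_add, hA, hA'] at h1 h2
    refine mem_interdictedValues_iff.mpr ⟨A.disjSum A', ?_, ?_⟩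
    · simp only [sum_disjSum, Sum.elim_inl, Sum.elim_inr, hA, hA']
      omega
    · ext <;> simp only <;> omega
  calc S + 1 = (Set.Iic S).ncard := (Set.ncard_Iic_nat S).symm
    _ ≤ (NDmin Y).ncard :=
      Set.ncard_le_ncard_of_injOn (fun a => (S - a, a))
        (fun a ha => mem_NDmin_of_add_eq hline (hmem a ha) (Nat.sub_add_cancel ha))
        (fun a _ b _ hab => congrArg Prod.snd hab)
        (interdictedValues_finite.subset (NDmin_subset _))

theorem sum_fin_two_pow (n : ℕ) : ∑ i : Fin n, 2 ^ (i : ℕ) = 2 ^ n - 1 := by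
  rw [Fin.sum_univ_eq_sum_range (2 ^ ·), Nat.geomSum_eq le_rfl, Nat.div_one]

theorem exists_two_pow_le_ncard_NDmin {n N : ℕ} (h : 2 * n ≤ N) :
    ∃ (u1 u2 c : Fin N → ℕ) (B : ℕ), 2 ^ n ≤ (NDmin (interdictedValues u1 u2 c B)).ncard := by
  set p : Fin n → ℕ := fun i => 2 ^ (i : ℕ)
  have hS : ∑ i, p i + 1 = 2 ^ n := by
    rw [sum_fin_two_pow]; exact Nat.sub_add_cancel Nat.one_le_two_pow
  have hp : ∀ a ≤ ∑ i, p i, ∃ A : Finset (Fin n), ∑ i ∈ A, p i = a := fun a ha =>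
    exists_finset_sum_two_pow_eq (by omega)
  let e : Fin N ≃ (Fin n ⊕ Fin n) ⊕ Fin (N - 2 * n) :=
    (finCongr (by omega)).trans (finSumFinEquiv.symm.trans (finSumFinEquiv.symm.sumCongr (.refl _)))
  refine ⟨Sum.elim (Sum.elim p 0) 0 ∘ e, Sum.elim (Sum.elim 0 p) 0 ∘ e,
    Sum.elim (Sum.elim p p) 0 ∘ e, ∑ i, p i, ?_⟩
  rw [interdictedValues_comp_equiv, interdictedValues_sumElim_zero, ← hS]
  exact sum_add_one_le_ncard_NDmin_of_subset_sums p hp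

theorem stmt8_general (n : ℕ) :
    ∃ (u1 u2 c : Fin ((9 * n ^ 2 - 7 * n) / 2) → ℕ) (B : ℕ),
      2 ^ n - 1 ≤
        (NDmin {y : ℕ × ℕ | ∃ γ : Fin ((9 * n ^ 2 - 7 * n) / 2) → ℕ,
          (∀ i, γ i ≤ 1) ∧ (∑ i, c i * γ i) ≤ B ∧
          y = (∑ i ∈ Finset.univ.filter (fun i => γ i = 0), u1 i,
               ∑ i ∈ Finset.univ.filter (fun i => γ i = 0), u2 i)}).ncard := by
  rcases Nat.lt_or_ge n 2 with hn | hn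
  · refine ⟨0, 0, 0, 0, ?_⟩
    have : 2 ^ n - 1 ≤ 1 := by interval_cases n <;> simp
    exact this.trans ((Set.ncard_pos (interdictedValues_finite.subset (NDmin_subset _))).mpr
      (NDmin_nonempty interdictedValues_nonempty))
  · have h2n : 2 * n ≤ (9 * n ^ 2 - 7 * n) / 2 := by
      rw [Nat.le_div_iff_mul_le two_pos]
      have : 11 * n ≤ 9 * n ^ 2 := by nlinarith
      omega
    obtain ⟨u1, u2, c, B, h⟩ := exists_two_pow_le_ncard_NDmin h2n
    exact ⟨u1, u2, c, B, (Nat.sub_le _ 1).trans h⟩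

theorem stmt8 (n : ℕ) (hn : 1 ≤ n) :
    ∃ (u1 u2 c : Fin ((9 * n ^ 2 - 7 * n) / 2) → ℕ) (B : ℕ),
      2 ^ n - 1 ≤
        (NDmin {y : ℕ × ℕ | ∃ γ : Fin ((9 * n ^ 2 - 7 * n) / 2) → ℕ,
          (∀ i, γ i ≤ 1) ∧ (∑ i, c i * γ i) ≤ B ∧
          y = (∑ i ∈ Finset.univ.filter (fun i => γ i = 0), u1 i,
               ∑ i ∈ Finset.univ.filter (fun i => γ i = 0), u2 i)}).ncard :=
  stmt8_general n
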